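/- arXiv:1204.5981 — 2 statements merged into one kernel-verified Lean document; each statement's English description precedes it below -/
import Mathlib

section
/- For finite relational structures A and B, there exist homomorphisms both from A to B and from B to A if and only if A and B satisfy exactly the same primitive positive sentences. -/
/-- A relational signature: a type of relation symbols with arities. -/
structure Signature where
  symb : Type
  ar : symb → ℕ

/-- A relational structure over signature `σ` with domain `α`. -/
structure Struc (σ : Signature) (α : Type) where
  rel : ∀ s, (Fin (σ.ar s) → α) → Prop

/-- A homomorphism between relational structures. -/
def IsHom {σ : Signature} {α β : Type} (A : Struc σ α) (B : Struc σ β)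
    (h : α → β) : Prop :=
  ∀ s t, A.rel s t → B.rel s (fun i => h (t i))

/-- Primitive positive formulas (relational atoms, conjunction — including the
empty conjunction `top` — and existential quantification), with `n` free variables. -/
inductive PP (σ : Signature) : ℕ → Type
  | top {n} : PP σ n
  | atom {n} (s : σ.symb) (ts : Fin (σ.ar s) → Fin n) : PP σ n
  | and {n} : PP σ n → PP σ n → PP σ n
  | ex {n} : PP σ (n + 1) → PP σ n

/-- Satisfaction of a primitive positive formula under a valuation. -/
def PP.Sat {σ : Signature} {α : Type} (A : Struc σ α) :
    ∀ {n}, PP σ n → (Fin n → α) → Prop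
  | _, .top, _ => True
  | _, .atom s ts, v => A.rel s (fun i => v (ts i))
  | _, .and φ ψ, v => φ.Sat A v ∧ ψ.Sat A v
  | _, .ex φ, v => ∃ a, φ.Sat A (Fin.cons a v)

/-!
Homomorphisms preserve primitive positive formulas, which gives one direction. Conversely, if
there is no homomorphism `A → B`, choose for each of the finitely many maps `h : α → β` an atom
of `A` that `h` fails to preserve. Existentially quantifying the conjunction of these atoms, with
one variable per element of `A`, gives a pp sentence true in `A`; a witness for it in `B` would be
a map preserving every chosen atom, including its own.
-/

namespace PP

variable {σ : Signature} {α β : Type}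

theorem Sat.map {A : Struc σ α} {B : Struc σ β} {h : α → β} (hh : IsHom A B h) :
    ∀ {n} {φ : PP σ n} {v : Fin n → α}, φ.Sat A v → φ.Sat B (h ∘ v)
  | _, .top, _, _ => trivial
  | _, .atom s _, _, hφ => hh s _ hφ
  | _, .and _ _, _, hφ => And.intro (Sat.map hh hφ.1) (Sat.map hh hφ.2)
  | _, .ex _, _, hφ => hφ.elim fun a hφ => ⟨h a, Fin.comp_cons h a _ ▸ hφ.map hh⟩

theorem Sat.map_sentence {A : Struc σ α} {B : Struc σ β} {h : α → β} (hh : IsHom A B h)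
    {φ : PP σ 0} (hφ : φ.Sat A Fin.elim0) : φ.Sat B Fin.elim0 :=
  Subsingleton.elim (h ∘ Fin.elim0) Fin.elim0 ▸ hφ.map hh

def conj {n : ℕ} : ∀ {m : ℕ}, (Fin m → (s : σ.symb) × (Fin (σ.ar s) → Fin n)) → PP σ n
  | 0, _ => .top
  | _ + 1, F => .and (.atom (F 0).1 (F 0).2) (conj (Fin.tail F))

theorem sat_conj (A : Struc σ α) {n : ℕ} :
    ∀ {m : ℕ} (F : Fin m → (s : σ.symb) × (Fin (σ.ar s) → Fin n)) (v : Fin n → α),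
      (conj F).Sat A v ↔ ∀ j, A.rel (F j).1 (v ∘ (F j).2)
  | 0, _, _ => by simp [conj, Sat]
  | _ + 1, F, v => by
    rw [Fin.forall_fin_succ]
    exact and_congr Iff.rfl (sat_conj A (Fin.tail F) v)

def exs : ∀ n, PP σ n → PP σ 0
  | 0, φ => φ
  | n + 1, φ => exs n (.ex φ)

theorem sat_exs (A : Struc σ α) :
    ∀ (n : ℕ) (φ : PP σ n), (exs n φ).Sat A Fin.elim0 ↔ ∃ v, φ.Sat A v
  | 0, φ => by rw [Fin.exists_fin_zero_pi]; exact Iff.of_eq (congrArg _ (Subsingleton.elim _ _))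
  | n + 1, φ => by rw [exs, sat_exs A n, Fin.exists_fin_succ_pi, exists_comm]; rfl

theorem exists_sentence_sat_iff_exists_map [Finite α] {ι : Type} [Finite ι]
    (F : ι → (s : σ.symb) × (Fin (σ.ar s) → α)) :
    ∃ φ : PP σ 0, ∀ {γ : Type} (C : Struc σ γ),
      φ.Sat C Fin.elim0 ↔ ∃ h : α → γ, ∀ i, C.rel (F i).1 (h ∘ (F i).2) := by
  obtain ⟨n, ⟨e⟩⟩ := Finite.exists_equiv_fin α
  obtain ⟨m, ⟨f⟩⟩ := Finite.exists_equiv_fin ι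
  refine ⟨exs n (conj fun j => ⟨(F (f.symm j)).1, e ∘ (F (f.symm j)).2⟩), fun {γ} C => ?_⟩
  simp only [sat_exs, sat_conj]
  exact (e.symm.arrowCongr (Equiv.refl γ)).exists_congr fun v =>
    (f.forall_congr_left (p := fun i => C.rel (F i).1 (v ∘ e ∘ (F i).2))).symm

end PP

open PP

theorem exists_isHom_of_forall_sat_imp {σ : Signature} {α β : Type} [Finite α] [Finite β]
    {A : Struc σ α} {B : Struc σ β}
    (H : ∀ φ : PP σ 0, φ.Sat A Fin.elim0 → φ.Sat B Fin.elim0) : ∃ h : α → β, IsHom A B h := by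
  by_contra! hno
  have : ∀ h : α → β, ∃ s t, A.rel s t ∧ ¬ B.rel s fun i => h (t i) := by
    simpa [IsHom] using hno
  choose s t hA hB using this
  obtain ⟨φ, hφ⟩ := exists_sentence_sat_iff_exists_map (σ := σ) fun h : α → β => ⟨s h, t h⟩
  obtain ⟨h, hh⟩ := (hφ B).1 (H φ ((hφ A).2 ⟨id, hA⟩))
  exact hB h (hh h)

/-- Finite structures `A` and `B` admit homomorphisms in both
directions iff they satisfy exactly the same primitive positive sentences. -/
theorem hom_equiv_iff_same_pp {σ : Signature} {α β : Type} [Finite α] [Finite β]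
    (A : Struc σ α) (B : Struc σ β) :
    ((∃ h : α → β, IsHom A B h) ∧ (∃ g : β → α, IsHom B A g)) ↔
      (∀ φ : PP σ 0, φ.Sat A Fin.elim0 ↔ φ.Sat B Fin.elim0) := by
  constructor
  · rintro ⟨⟨h, hh⟩, g, hg⟩ φ
    exact ⟨(·.map_sentence hh), (·.map_sentence hg)⟩
  · intro H
    exact ⟨exists_isHom_of_forall_sat_imp fun φ => (H φ).1,
      exists_isHom_of_forall_sat_imp fun φ => (H φ).2⟩
end

section
/- For finite relational structures A and B the following are equivalent: (i) every positive equality-free first-order sentence true in A is true in B; (ii) there exists a surjective hypermorphism from A to B; (iii) B ⊨ θ_{A,|B|}. -/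
/-- Positive equality-free first-order formulas (relational atoms, ∧, ∨ — including
the empty conjunction `top` and empty disjunction `bot` — ∃ and ∀), `n` free variables. -/
inductive PEF (σ : Signature) : ℕ → Type
  | top {n} : PEF σ n
  | bot {n} : PEF σ n
  | atom {n} (s : σ.symb) (ts : Fin (σ.ar s) → Fin n) : PEF σ n
  | and {n} : PEF σ n → PEF σ n → PEF σ n
  | or {n} : PEF σ n → PEF σ n → PEF σ n
  | ex {n} : PEF σ (n + 1) → PEF σ n
  | all {n} : PEF σ (n + 1) → PEF σ n

/-- Satisfaction of a positive equality-free formula under a valuation. -/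
def PEF.Sat {σ : Signature} {α : Type} (A : Struc σ α) :
    ∀ {n}, PEF σ n → (Fin n → α) → Prop
  | _, .top, _ => True
  | _, .bot, _ => False
  | _, .atom s ts, v => A.rel s (fun i => v (ts i))
  | _, .and φ ψ, v => φ.Sat A v ∧ ψ.Sat A v
  | _, .or φ ψ, v => φ.Sat A v ∨ ψ.Sat A v
  | _, .ex φ, v => ∃ a, φ.Sat A (Fin.cons a v)
  | _, .all φ, v => ∀ a, φ.Sat A (Fin.cons a v)

/-- A surjective hypermorphism from `A` to `B`: a total, surjective, preserving
multivalued map from the domain of `A` to subsets of the domain of `B`. -/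
structure SurjHyper {σ : Signature} {α β : Type} (A : Struc σ α) (B : Struc σ β)
    (f : α → Set β) : Prop where
  total : ∀ a, (f a).Nonempty
  surj : ∀ b, ∃ a, b ∈ f a
  pres : ∀ s (t : Fin (σ.ar s) → α) (u : Fin (σ.ar s) → β),
    A.rel s t → (∀ i, u i ∈ f (t i)) → B.rel s u

/-- Conjunction of a list of formulas. -/
def PEF.conjList {σ : Signature} {n : ℕ} : List (PEF σ n) → PEF σ n
  | [] => .top
  | φ :: l => .and φ (conjList l)

/-- Disjunction of a list of formulas. -/
def PEF.orList {σ : Signature} {n : ℕ} : List (PEF σ n) → PEF σ n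
  | [] => .bot
  | φ :: l => .or φ (orList l)

/-- Existentially quantify the `m` innermost variables. -/
def PEF.exs {σ : Signature} : ∀ {k m : ℕ}, PEF σ (k + m) → PEF σ k
  | _, 0, φ => φ
  | _, m + 1, φ => PEF.exs (m := m) φ.ex

/-- Universally quantify the `m` innermost variables. -/
def PEF.alls {σ : Signature} : ∀ {k m : ℕ}, PEF σ (k + m) → PEF σ k
  | _, 0, φ => φ
  | _, m + 1, φ => PEF.alls (m := m) φ.all

/-- The conjunction of all atoms expressing the positive facts of `A` on the tuple
of elements `g` (the diagram formula `φ_{A(g)}`). -/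
noncomputable def diagram {σ : Signature} [Fintype σ.symb] [DecidableEq σ.symb]
    {α : Type} [Fintype α] [DecidableEq α]
    (A : Struc σ α) [∀ s t, Decidable (A.rel s t)] {k : ℕ} (g : Fin k → α) :
    PEF σ k :=
  PEF.conjList
    (((Finset.univ.filter
        (fun p : Σ s : σ.symb, Fin (σ.ar s) → Fin k =>
          A.rel p.1 (fun i => g (p.2 i)))).toList).map
      (fun p => PEF.atom p.1 p.2))

/-- The canonical positive equality-free sentence
`θ_{A,m} = ∃v̄ (φ_{A(r̄)}(v̄) ∧ ∀w̄ ⋁_{t̄ ∈ A^m} φ_{A(r̄,t̄)}(v̄,w̄))`,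
where `r̄` enumerates the elements of `A` via `e`. -/
noncomputable def theta {σ : Signature} [Fintype σ.symb] [DecidableEq σ.symb]
    {α : Type} [Fintype α] [DecidableEq α]
    (A : Struc σ α) [∀ s t, Decidable (A.rel s t)]
    (n : ℕ) (e : α ≃ Fin n) (m : ℕ) : PEF σ 0 :=
  PEF.exs (k := 0) (m := n) (PEF.and
    (diagram A (fun i : Fin (0 + n) => e.symm ⟨(i : ℕ), by have := i.isLt; omega⟩))
    (PEF.alls (k := 0 + n) (m := m)
      (PEF.orList ((Finset.univ : Finset (Fin m → α)).toList.map (fun t =>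
        diagram A (fun j : Fin ((0 + n) + m) =>
          if h : (j : ℕ) < m then t ⟨(j : ℕ), h⟩
          else e.symm ⟨(j : ℕ) - m, by have := j.isLt; omega⟩))))))

/-!
A surjective hypermorphism transports witnesses of `∃` forward (totality) and, for `∀`,
pulls every element of `B` back to one of `A` (surjectivity), so positive equality-free
sentences go from `A` to `B`. `θ_{A,m}` holds in `A` itself, hence (i) gives (iii). Conversely,
a witness of `θ_{A,|B|}` in `B`, with `w̄` instantiated to an enumeration of `B`, yields tuples
`(r̄, t̄)` in `A` and `(v̄, w̄)` in `B`, both onto, such that every atom true of the first is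
true of the second; sending `a` to the entries of the second tuple at positions where the
first tuple takes the value `a` is a surjective hypermorphism.
-/

namespace PEF

variable {σ : Signature} {γ : Type}

lemma sat_conjList (C : Struc σ γ) {n : ℕ} (l : List (PEF σ n)) (v : Fin n → γ) :
    (conjList l).Sat C v ↔ ∀ φ ∈ l, φ.Sat C v := by
  induction l <;> simp [conjList, Sat, *]

lemma sat_orList (C : Struc σ γ) {n : ℕ} (l : List (PEF σ n)) (v : Fin n → γ) :
    (orList l).Sat C v ↔ ∃ φ ∈ l, φ.Sat C v := by
  induction l <;> simp [orList, Sat, *]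

/-- `v` on the outer `k` variables, `u` on the inner `m`; as with `Fin.cons`, the inner (more
recently bound) variables take the low indices. -/
def extendVal {k m : ℕ} (v : Fin k → γ) (u : Fin m → γ) : Fin (k + m) → γ :=
  fun j => if h : (j : ℕ) < m then u ⟨j, h⟩ else v ⟨j - m, by omega⟩

lemma extendVal_zero {k : ℕ} (v : Fin k → γ) (u : Fin 0 → γ) : extendVal v u = v := by
  funext j; simp [extendVal]

lemma extendVal_elim0 {m : ℕ} (u : Fin m → γ) :
    extendVal Fin.elim0 u = u ∘ Fin.cast (Nat.zero_add m) := by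
  funext j
  simp [extendVal, show (j : ℕ) < m by omega, Fin.cast]

lemma extendVal_surjective_left {k m : ℕ} {v : Fin k → γ} (hv : v.Surjective) (u : Fin m → γ) :
    (extendVal v u).Surjective := by
  intro c
  obtain ⟨i, rfl⟩ := hv c
  exact ⟨⟨m + i, by omega⟩, by simp [extendVal]⟩

lemma extendVal_surjective_right {k m : ℕ} (v : Fin k → γ) {u : Fin m → γ} (hu : u.Surjective) :
    (extendVal v u).Surjective := by
  intro c
  obtain ⟨j, rfl⟩ := hu c
  exact ⟨⟨j, by omega⟩, by simp [extendVal]⟩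

lemma cons_extendVal {k m : ℕ} (v : Fin k → γ) (u : Fin m → γ) (a : γ) :
    Fin.cons a (extendVal v u) = extendVal v (Fin.cons a u) := by
  funext j
  refine Fin.cases ?_ (fun i => ?_) j
  · simp [extendVal]
  · by_cases h : (i : ℕ) < m
    · simpa [extendVal, h] using (Fin.cons_succ (α := fun _ => γ) a u ⟨i, h⟩).symm
    · simp [extendVal, h]

lemma sat_exs (C : Struc σ γ) {k : ℕ} :
    ∀ {m : ℕ} (φ : PEF σ (k + m)) (v : Fin k → γ),
      (exs φ).Sat C v ↔ ∃ u : Fin m → γ, φ.Sat C (extendVal v u)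
  | 0, φ, v => by simp [exs, extendVal_zero]
  | m + 1, φ, v => by
    rw [exs, sat_exs C φ.ex v]
    simp only [Sat, cons_extendVal]
    exact ⟨fun ⟨u, a, h⟩ => ⟨_, h⟩,
      fun ⟨u, h⟩ => ⟨Fin.tail u, u 0, by rwa [Fin.cons_self_tail]⟩⟩

lemma sat_alls (C : Struc σ γ) {k : ℕ} :
    ∀ {m : ℕ} (φ : PEF σ (k + m)) (v : Fin k → γ),
      (alls φ).Sat C v ↔ ∀ u : Fin m → γ, φ.Sat C (extendVal v u)
  | 0, φ, v => by simp [alls, extendVal_zero]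
  | m + 1, φ, v => by
    rw [alls, sat_alls C φ.all v]
    simp only [Sat, cons_extendVal]
    exact ⟨fun h u => by simpa only [Fin.cons_self_tail] using h (Fin.tail u) (u 0),
      fun h u a => h _⟩

lemma sat_exs_zero (C : Struc σ γ) {m : ℕ} (φ : PEF σ (0 + m)) :
    (exs φ).Sat C Fin.elim0 ↔ ∃ v : Fin (0 + m) → γ, φ.Sat C v := by
  simp only [sat_exs, extendVal_elim0]
  exact ⟨fun ⟨u, h⟩ => ⟨_, h⟩, fun ⟨v, h⟩ => ⟨v ∘ Fin.cast (Nat.zero_add m).symm, by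
    simpa [Function.comp_def] using h⟩⟩

end PEF

section Hypermorphism

variable {σ : Signature} {α β : Type} {A : Struc σ α} {B : Struc σ β} {f : α → Set β}

lemma forall_cons_mem_cons {n : ℕ} {v : Fin n → α} {w : Fin n → β} {a : α} {b : β}
    (hb : b ∈ f a) (hw : ∀ i, w i ∈ f (v i)) :
    ∀ i, (Fin.cons b w : Fin (n + 1) → β) i ∈ f ((Fin.cons a v : Fin (n + 1) → α) i) :=
  Fin.cases (by simpa using hb) (by simpa using hw)

theorem PEF.Sat.of_surjHyper (hf : SurjHyper A B f) {n : ℕ} {φ : PEF σ n}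
    {v : Fin n → α} {w : Fin n → β} (hw : ∀ i, w i ∈ f (v i)) (h : φ.Sat A v) :
    φ.Sat B w := by
  induction φ with
  | top => trivial
  | bot => exact h.elim
  | atom s ts => exact hf.pres s _ _ h fun i => hw (ts i)
  | and φ ψ ihφ ihψ => exact ⟨ihφ hw h.1, ihψ hw h.2⟩
  | or φ ψ ihφ ihψ => exact h.imp (ihφ hw) (ihψ hw)
  | ex φ ih =>
    obtain ⟨a, ha⟩ := h
    obtain ⟨b, hb⟩ := hf.total a
    exact ⟨b, ih (forall_cons_mem_cons hb hw) ha⟩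
  | all φ ih =>
    intro b
    obtain ⟨a, hb⟩ := hf.surj b
    exact ih (forall_cons_mem_cons hb hw) (h a)

end Hypermorphism

section Diagram

variable {σ : Signature} [Fintype σ.symb] [DecidableEq σ.symb] {α β γ : Type}
  [Fintype α] [DecidableEq α] (A : Struc σ α) [∀ s t, Decidable (A.rel s t)]

open PEF

lemma sat_diagram_iff (C : Struc σ γ) {k : ℕ} (g : Fin k → α) (w : Fin k → γ) :
    (diagram A g).Sat C w ↔ ∀ s (h : Fin (σ.ar s) → Fin k),
      A.rel s (fun i => g (h i)) → C.rel s (fun i => w (h i)) := by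
  simp only [diagram, sat_conjList, List.forall_mem_map, Finset.mem_toList, Finset.mem_filter,
    Finset.mem_univ, true_and, Sigma.forall, Sat]

lemma sat_diagram_self {k : ℕ} (g : Fin k → α) : (diagram A g).Sat A g :=
  (sat_diagram_iff A A g g).2 fun _ _ => id

lemma surjHyper_of_sat_diagram {B : Struc σ β} {k : ℕ} {g : Fin k → α} {w : Fin k → β}
    (hg : g.Surjective) (hw : w.Surjective) (h : (diagram A g).Sat B w) :
    SurjHyper A B fun a => w '' (g ⁻¹' {a}) where
  total a := by
    obtain ⟨j, rfl⟩ := hg a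
    exact ⟨w j, j, rfl, rfl⟩
  surj b := by
    obtain ⟨j, rfl⟩ := hw b
    exact ⟨g j, j, rfl, rfl⟩
  pres s t u hA hu := by
    choose idx hg_idx hw_idx using hu
    have := (sat_diagram_iff A B g w).1 h s idx
    simp only [Set.mem_preimage, Set.mem_singleton_iff] at hg_idx
    simp only [hg_idx, hw_idx] at this
    exact this hA

variable {n : ℕ} (e : α ≃ Fin n)

/-- The tuple `r̄` of `θ_{A,m}`. -/
def thetaEnum : Fin (0 + n) → α := e.symm ∘ Fin.cast (Nat.zero_add n)

omit [Fintype α] [DecidableEq α] in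
lemma thetaEnum_surjective : (thetaEnum e).Surjective :=
  e.symm.surjective.comp (finCongr (Nat.zero_add n)).surjective

lemma sat_theta_iff (C : Struc σ γ) (m : ℕ) :
    (theta A n e m).Sat C Fin.elim0 ↔ ∃ v : Fin (0 + n) → γ,
      (diagram A (thetaEnum e)).Sat C v ∧
      ∀ u : Fin m → γ, ∃ t : Fin m → α,
        (diagram A (extendVal (thetaEnum e) t)).Sat C (extendVal v u) := by
  simp only [theta, sat_exs_zero, Sat, sat_alls, sat_orList, List.mem_map,
    Finset.mem_toList, Finset.mem_univ, true_and, exists_exists_eq_and]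
  -- `theta` spells out `thetaEnum e` and `extendVal (thetaEnum e) t` by hand
  rfl

lemma sat_theta_self (m : ℕ) : (theta A n e m).Sat A Fin.elim0 :=
  (sat_theta_iff A e A m).2
    ⟨thetaEnum e, sat_diagram_self A _, fun u => ⟨u, sat_diagram_self A _⟩⟩

theorem exists_surjHyper_of_sat_theta {B : Struc σ β} {m : ℕ} {w : Fin m → β}
    (hw : w.Surjective) (h : (theta A n e m).Sat B Fin.elim0) :
    ∃ f : α → Set β, SurjHyper A B f := by
  obtain ⟨v, -, hall⟩ := (sat_theta_iff A e B m).1 h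
  obtain ⟨t, ht⟩ := hall w
  exact ⟨_, surjHyper_of_sat_diagram A (extendVal_surjective_left (thetaEnum_surjective e) t)
    (extendVal_surjective_right v hw) ht⟩

end Diagram

/-- For finite structures `A` and `B`, the following are
equivalent: (i) every positive equality-free sentence true in `A` is true in `B`;
(ii) there is a surjective hypermorphism from `A` to `B`; (iii) `B ⊨ θ_{A,|B|}`. -/
theorem pef_containment_tfae {σ : Signature} [Fintype σ.symb] [DecidableEq σ.symb]
    {α β : Type} [Fintype α] [DecidableEq α] [Fintype β]
    (A : Struc σ α) (B : Struc σ β) [∀ s t, Decidable (A.rel s t)]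
    (n : ℕ) (e : α ≃ Fin n) :
    ((∀ φ : PEF σ 0, φ.Sat A Fin.elim0 → φ.Sat B Fin.elim0) ↔
      (∃ f : α → Set β, SurjHyper A B f)) ∧
    ((∃ f : α → Set β, SurjHyper A B f) ↔
      (theta A n e (Fintype.card β)).Sat B Fin.elim0) := by
  have hyper_imp_pef : (∃ f : α → Set β, SurjHyper A B f) →
      ∀ φ : PEF σ 0, φ.Sat A Fin.elim0 → φ.Sat B Fin.elim0 :=
    fun ⟨_, hf⟩ _ => PEF.Sat.of_surjHyper hf finZeroElim
  have pef_imp_theta : (∀ φ : PEF σ 0, φ.Sat A Fin.elim0 → φ.Sat B Fin.elim0) →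
      (theta A n e (Fintype.card β)).Sat B Fin.elim0 :=
    fun h => h _ (sat_theta_self A e _)
  have theta_imp_hyper : (theta A n e (Fintype.card β)).Sat B Fin.elim0 →
      ∃ f : α → Set β, SurjHyper A B f :=
    exists_surjHyper_of_sat_theta A e (Fintype.equivFin β).symm.surjective
  exact ⟨⟨theta_imp_hyper ∘ pef_imp_theta, hyper_imp_pef⟩,
    ⟨pef_imp_theta ∘ hyper_imp_pef, theta_imp_hyper⟩⟩
end
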